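/- Let Φ be a monotone NAE-3-SAT instance in which each variable occurs in exactly four clauses, and let G(Φ) be the edge-colored graph constructed from Φ. If the edge set of G(Φ) can be partitioned into two rainbow spanning trees, then Φ has a not-all-equal truth assignment. -/
import Mathlib


namespace PackingRainbowStmt2

/-- An edge of the multigraph connects via set `F`: there is an edge in `F` with
endpoints `a` and `b`. -/
def Step {V E : Type*} (ends : E → Sym2 V) (F : Set E) (a b : V) : Prop :=
  ∃ e ∈ F, ends e = s(a, b)

/-- The edge set `F` makes the multigraph with endpoint map `ends` connected
(any two vertices are joined by a walk using edges of `F`). -/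
def Connects {V E : Type*} (ends : E → Sym2 V) (F : Set E) : Prop :=
  ∀ a b : V, Relation.ReflTransGen (Step ends F) a b

/-- `F` is a spanning tree: it connects all vertices, minimally so. -/
def IsSpanningTree {V E : Type*} (ends : E → Sym2 V) (F : Set E) : Prop :=
  Connects ends F ∧ ∀ e ∈ F, ¬ Connects ends (F \ {e})

/-- `F` is rainbow: each color class contains at most one edge of `F`. -/
def Rainbow {E C : Type*} (color : E → C) (F : Set E) : Prop :=
  ∀ e ∈ F, ∀ f ∈ F, color e = color f → e = f

/-- A monotone NAE-3-SAT instance with `n` variables and `m` clauses in which every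
clause contains three distinct variables and every variable occurs in exactly four
clauses.  `occ (j, q) = (i, p)` means that the `q`-th variable of clause `j` is the
variable `i`, and that this is the `p`-th occurrence of `i` in the order of the
clauses.  Bijectivity of `occ` encodes that every variable occurs exactly four times. -/
structure NAE4Instance (n m : ℕ) where
  occ : (Fin m × Fin 3) ≃ (Fin n × Fin 4)
  distinct : ∀ j : Fin m, Function.Injective fun q : Fin 3 => (occ (j, q)).1
  mono : ∀ j q j' q', (occ (j, q)).1 = (occ (j', q')).1 →
    Prod.Lex (· < ·) (· < ·) (j, q) (j', q') → (occ (j, q)).2 < (occ (j', q')).2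

/-- `Φ` has a not-all-equal truth assignment: every clause contains
at least one true and at least one false variable. -/
def HasNAEAssignment {n m : ℕ} (Φ : NAE4Instance n m) : Prop :=
  ∃ a : Fin n → Bool, ∀ j : Fin m,
    (∃ q : Fin 3, a (Φ.occ (j, q)).1 = true) ∧ (∃ q : Fin 3, a (Φ.occ (j, q)).1 = false)

/-- Vertices of the graph `G(Φ)`: for every variable `i` and `p ∈ [4]` the four
vertices `u i p, v i p, w i p, z i p` of a `K₄`; for every clause `j` the triangle
vertices `c j q`; and the extra vertex `r`. -/
inductive Vtx (n m : ℕ) where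
  | u (i : Fin n) (p : Fin 4)
  | v (i : Fin n) (p : Fin 4)
  | w (i : Fin n) (p : Fin 4)
  | z (i : Fin n) (p : Fin 4)
  | c (j : Fin m) (q : Fin 3)
  | r
  deriving DecidableEq, Fintype

/-- Edges of `G(Φ)`: the six edges of each `K₄`; the triangle edges
`c j q — c j (q+1)`; the edges `z^{i_q}_ℓ — c j q`; and two parallel
edges between `r` and each `u i p`. -/
inductive Edg (n m : ℕ) where
  | uv (i : Fin n) (p : Fin 4)
  | uw (i : Fin n) (p : Fin 4)
  | uz (i : Fin n) (p : Fin 4)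
  | vw (i : Fin n) (p : Fin 4)
  | vz (i : Fin n) (p : Fin 4)
  | wz (i : Fin n) (p : Fin 4)
  | tri (j : Fin m) (q : Fin 3)
  | zc (j : Fin m) (q : Fin 3)
  | ru (i : Fin n) (p : Fin 4) (b : Fin 2)
  deriving DecidableEq, Fintype

/-- The colors of the edge-coloring of `G(Φ)`. -/
inductive Col (n m : ℕ) where
  | rpar (i : Fin n) (p : Fin 4)
  | ca (i : Fin n) (p : Fin 4)
  | cb (i : Fin n) (p : Fin 4)
  | cc (i : Fin n) (p : Fin 4)
  | cd (i : Fin n) (p : Fin 4)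
  deriving DecidableEq, Fintype

/-- Endpoints of the edges of `G(Φ)`. -/
def ends {n m : ℕ} (Φ : NAE4Instance n m) : Edg n m → Sym2 (Vtx n m)
  | .uv i p => s(.u i p, .v i p)
  | .uw i p => s(.u i p, .w i p)
  | .uz i p => s(.u i p, .z i p)
  | .vw i p => s(.v i p, .w i p)
  | .vz i p => s(.v i p, .z i p)
  | .wz i p => s(.w i p, .z i p)
  | .tri j q => s(.c j q, .c j (q + 1))
  | .zc j q => s(.z (Φ.occ (j, q)).1 (Φ.occ (j, q)).2, .c j q)
  | .ru i p _ => s(.r, .u i p)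

/-- The edge-coloring of `G(Φ)`: the two parallel edges at `r` to `u i p` form the
class `rpar i p`; the classes corresponding to variable `i` and `p ∈ [4]` are
`ca i p = {w^i_p z^i_p, z^i_p c^{j_p}_{q_p}}`, `cb i p = {v^i_p z^i_p, u^i_{p+1} v^i_{p+1}}`,
`cc i p = {u^i_p z^i_p, v^i_p w^i_p}` and `cd i p = {u^i_p w^i_p, c^{j_p}_{q_p} c^{j_p}_{q_p+1}}`,
where `c^{j_p}_{q_p}` is the triangle neighbor of `z^i_p`, i.e. `(j_p, q_p) = Φ.occ.symm (i, p)`. -/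
def color {n m : ℕ} (Φ : NAE4Instance n m) : Edg n m → Col n m
  | .ru i p _ => .rpar i p
  | .wz i p => .ca i p
  | .zc j q => .ca (Φ.occ (j, q)).1 (Φ.occ (j, q)).2
  | .vz i p => .cb i p
  | .uv i p => .cb i (p - 1)
  | .uz i p => .cc i p
  | .vw i p => .cc i p
  | .uw i p => .cd i p
  | .tri j q => .cd (Φ.occ (j, q)).1 (Φ.occ (j, q)).2

/-- The edge set of `G(Φ)` can be partitioned into the two rainbow
spanning trees `T₁` and `T₂`. -/
def TwoRainbowSpanningTrees {n m : ℕ} (Φ : NAE4Instance n m) (T₁ T₂ : Set (Edg n m)) : Prop :=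
  T₁ ∪ T₂ = Set.univ ∧ Disjoint T₁ T₂ ∧
    IsSpanningTree (ends Φ) T₁ ∧ IsSpanningTree (ends Φ) T₂ ∧
    Rainbow (color Φ) T₁ ∧ Rainbow (color Φ) T₂

section Aux

variable {V E C : Type*}

lemma step_symm (ends : E → Sym2 V) (F : Set E) {a b : V} (h : Step ends F a b) :
    Step ends F b a := by
  obtain ⟨e, he, hends⟩ := h
  exact ⟨e, he, by rw [hends, Sym2.eq_swap]⟩

lemma reach_symm (ends : E → Sym2 V) (F : Set E) {a b : V}
    (h : Relation.ReflTransGen (Step ends F) a b) :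
    Relation.ReflTransGen (Step ends F) b a := by
  induction h with
  | refl => exact .refl
  | tail _ hstep ih => exact (Relation.ReflTransGen.single (step_symm _ _ hstep)).trans ih

lemma connects_of_subst {ends : E → Sym2 V} {F : Set E} (hF : Connects ends F) (e : E)
    {x y : V} (hxy : ends e = s(x, y))
    (hpath : Relation.ReflTransGen (Step ends (F \ {e})) x y) :
    Connects ends (F \ {e}) := by
  have step_ok : ∀ u v, Step ends F u v →
      Relation.ReflTransGen (Step ends (F \ {e})) u v := by
    rintro u v ⟨f, hf, hends⟩
    by_cases hfe : f = e
    · subst hfe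
      have h2 : s(x, y) = s(u, v) := hxy.symm.trans hends
      rcases Sym2.eq_iff.mp h2 with ⟨rfl, rfl⟩ | ⟨rfl, rfl⟩
      · exact hpath
      · exact reach_symm _ _ hpath
    · exact Relation.ReflTransGen.single ⟨f, ⟨hf, by simpa using hfe⟩, hends⟩
  intro a b
  induction hF a b with
  | refl => exact .refl
  | tail _ hstep ih => exact ih.trans (step_ok _ _ hstep)

lemma no_triangle {ends : E → Sym2 V} {T : Set E} (hT : IsSpanningTree ends T)
    {e1 e2 e3 : E} {x y z : V}
    (h1 : e1 ∈ T) (h2 : e2 ∈ T) (h3 : e3 ∈ T) (n2 : e2 ≠ e1) (n3 : e3 ≠ e1)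
    (E1 : ends e1 = s(x, y)) (E2 : ends e2 = s(x, z)) (E3 : ends e3 = s(z, y)) : False := by
  apply hT.2 e1 h1
  apply connects_of_subst hT.1 e1 E1
  exact (Relation.ReflTransGen.single ⟨e2, ⟨h2, by simpa using n2⟩, E2⟩).trans
    (Relation.ReflTransGen.single ⟨e3, ⟨h3, by simpa using n3⟩, E3⟩)

lemma reach_closed {ends : E → Sym2 V} {F : Set E} (S : Set V)
    (closed : ∀ e ∈ F, ∀ a b, ends e = s(a, b) → a ∈ S → b ∈ S)
    {x y : V} (h : Relation.ReflTransGen (Step ends F) x y) (hx : x ∈ S) : y ∈ S := by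
  induction h with
  | refl => exact hx
  | tail _ hstep ih =>
    obtain ⟨e, he, hends⟩ := hstep
    exact closed e he _ _ hends ih

lemma splitc {T T' : Set E} (color : E → C)
    (hu : ∀ e, e ∈ T ↔ e ∉ T')
    (hR : Rainbow color T) (hR' : Rainbow color T')
    {e f : E} (hne : e ≠ f) (hc : color e = color f) : e ∈ T ↔ f ∈ T' := by
  have hu' : ∀ e, e ∈ T' ↔ e ∉ T := fun e => by have := hu e; tauto
  constructor
  · intro he
    by_contra hf
    exact hne (hR e he f ((hu f).mpr hf) hc)
  · intro hf
    by_contra he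
    exact hne (hR' e ((hu' e).mpr he) f hf hc)

end Aux

section Gadget

variable {n m : ℕ} (Φ : NAE4Instance n m) {T T' : Set (Edg n m)}

lemma keyA (hu : ∀ e, e ∈ T ↔ e ∉ T')
    (hT : IsSpanningTree (ends Φ) T) (hT' : IsSpanningTree (ends Φ) T')
    (hR : Rainbow (color Φ) T) (hR' : Rainbow (color Φ) T')
    (i : Fin n) (p : Fin 4) (hwz : Edg.wz i p ∈ T) :
    Edg.vz i p ∈ T' ∧ Edg.uv i p ∈ T := by
  have hu' : ∀ e, e ∈ T' ↔ e ∉ T := fun e => by have := hu e; tauto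
  have t_cc : Edg.uz i p ∈ T ↔ Edg.vw i p ∈ T' :=
    splitc (color Φ) hu hR hR' (fun h => nomatch h) rfl
  have hvz : Edg.vz i p ∈ T' := by
    by_contra h
    have hvzT : Edg.vz i p ∈ T := (hu _).mpr h
    have hvw : Edg.vw i p ∈ T' := by
      by_contra h2
      exact no_triangle hT hvzT ((hu _).mpr h2) hwz (fun h => nomatch h) (fun h => nomatch h)
        rfl rfl rfl
    have huz : Edg.uz i p ∈ T := t_cc.mpr hvw
    have huw : Edg.uw i p ∈ T' := by
      by_contra h2
      exact no_triangle hT huz ((hu _).mpr h2) hwz (fun h => nomatch h) (fun h => nomatch h)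
        rfl rfl rfl
    have huv : Edg.uv i p ∈ T' := by
      by_contra h2
      exact no_triangle hT huz ((hu _).mpr h2) hvzT (fun h => nomatch h) (fun h => nomatch h)
        rfl rfl rfl
    exact no_triangle hT' huw huv hvw (fun h => nomatch h) (fun h => nomatch h) rfl rfl rfl
  refine ⟨hvz, ?_⟩
  by_contra h
  have huvT' : Edg.uv i p ∈ T' := (hu' _).mpr h
  have huz : Edg.uz i p ∈ T := by
    by_contra h2
    exact no_triangle hT' ((hu' _).mpr h2) huvT' hvz (fun h => nomatch h) (fun h => nomatch h)
      rfl rfl rfl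
  have hvw : Edg.vw i p ∈ T' := t_cc.mp huz
  have huw : Edg.uw i p ∈ T' := by
    by_contra h2
    exact no_triangle hT huz ((hu _).mpr h2) hwz (fun h => nomatch h) (fun h => nomatch h)
      rfl rfl rfl
  exact no_triangle hT' huw huvT' hvw (fun h => nomatch h) (fun h => nomatch h) rfl rfl rfl

lemma wz_iff_vz (hu : ∀ e, e ∈ T ↔ e ∉ T')
    (hT : IsSpanningTree (ends Φ) T) (hT' : IsSpanningTree (ends Φ) T')
    (hR : Rainbow (color Φ) T) (hR' : Rainbow (color Φ) T')
    (i : Fin n) (p : Fin 4) : Edg.wz i p ∈ T ↔ Edg.vz i p ∈ T' := by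
  have hu' : ∀ e, e ∈ T' ↔ e ∉ T := fun e => by have := hu e; tauto
  constructor
  · intro h; exact (keyA Φ hu hT hT' hR hR' i p h).1
  · intro h
    by_contra hw
    have := (keyA Φ hu' hT' hT hR' hR i p ((hu' _).mpr hw)).1
    exact (hu _).mp this h

lemma wz_iff_uv (hu : ∀ e, e ∈ T ↔ e ∉ T')
    (hT : IsSpanningTree (ends Φ) T) (hT' : IsSpanningTree (ends Φ) T')
    (hR : Rainbow (color Φ) T) (hR' : Rainbow (color Φ) T')
    (i : Fin n) (p : Fin 4) : Edg.wz i p ∈ T ↔ Edg.uv i p ∈ T := by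
  have hu' : ∀ e, e ∈ T' ↔ e ∉ T := fun e => by have := hu e; tauto
  constructor
  · intro h; exact (keyA Φ hu hT hT' hR hR' i p h).2
  · intro h
    by_contra hw
    have := (keyA Φ hu' hT' hT hR' hR i p ((hu' _).mpr hw)).2
    exact (hu _).mp h this

/-- All four occurrences of a variable behave alike: `wz i p ∈ T ↔ wz i 0 ∈ T`. -/
lemma wz_consistent (hu : ∀ e, e ∈ T ↔ e ∉ T')
    (hT : IsSpanningTree (ends Φ) T) (hT' : IsSpanningTree (ends Φ) T')
    (hR : Rainbow (color Φ) T) (hR' : Rainbow (color Φ) T')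
    (i : Fin n) (p : Fin 4) : Edg.wz i p ∈ T ↔ Edg.wz i 0 ∈ T := by
  have hadj : ∀ p : Fin 4, (Edg.wz i p ∈ T ↔ Edg.wz i (p - 1) ∈ T) := by
    intro p
    have h1 : Edg.uv i p ∈ T ↔ Edg.vz i (p - 1) ∈ T' :=
      splitc (color Φ) hu hR hR' (fun h => nomatch h) rfl
    exact ((wz_iff_uv Φ hu hT hT' hR hR' i p).trans h1).trans
      (wz_iff_vz Φ hu hT hT' hR hR' i (p - 1)).symm
  have h1 := hadj 1
  have h2 := hadj 2
  have h3 := hadj 3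
  rw [show (1 : Fin 4) - 1 = 0 by decide] at h1
  rw [show (2 : Fin 4) - 1 = 1 by decide] at h2
  rw [show (3 : Fin 4) - 1 = 2 by decide] at h3
  fin_cases p
  · rfl
  · exact h1
  · exact h2.trans h1
  · exact (h3.trans h2).trans h1

/-- Link between the clause edge `zc j q` and the gadget: `zc j q ∈ T' ↔ wz ... ∈ T`. -/
lemma zc_iff_wz (hu : ∀ e, e ∈ T ↔ e ∉ T')
    (hR : Rainbow (color Φ) T) (hR' : Rainbow (color Φ) T')
    (j : Fin m) (q : Fin 3) :
    Edg.wz (Φ.occ (j, q)).1 (Φ.occ (j, q)).2 ∈ T ↔ Edg.zc j q ∈ T' :=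
  splitc (color Φ) hu hR hR' (fun h => nomatch h) rfl

/-- Not all three clause edges of a clause can lie in the same tree. -/
lemma clause_not_all (hu : ∀ e, e ∈ T ↔ e ∉ T')
    (hT' : IsSpanningTree (ends Φ) T')
    (j : Fin m) (hall : ∀ q, Edg.zc j q ∈ T) : False := by
  have hreach := hT'.1 (Vtx.c j 0) Vtx.r
  have hclosed : ∀ e ∈ T', ∀ a b, ends Φ e = s(a, b) →
      a ∈ {x : Vtx n m | ∃ q, x = Vtx.c j q} → b ∈ {x : Vtx n m | ∃ q, x = Vtx.c j q} := by
    rintro e he a b hends ⟨qa, rfl⟩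
    cases e with
    | tri j' q' =>
      rcases Sym2.eq_iff.mp hends with ⟨h1, rfl⟩ | ⟨rfl, h2⟩
      · injection h1 with hj hq; subst hj; exact ⟨_, rfl⟩
      · injection h2 with hj hq; subst hj; exact ⟨_, rfl⟩
    | zc j' q' =>
      rcases Sym2.eq_iff.mp hends with ⟨h1, rfl⟩ | ⟨rfl, h2⟩
      · exact absurd h1 (fun h => nomatch h)
      · injection h2 with hj hq
        subst hj
        exact absurd he ((hu _).mp (hall q'))
    | uv i p => rcases Sym2.eq_iff.mp hends with ⟨h1, _⟩ | ⟨_, h2⟩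
                · exact absurd h1 (fun h => nomatch h)
                · exact absurd h2 (fun h => nomatch h)
    | uw i p => rcases Sym2.eq_iff.mp hends with ⟨h1, _⟩ | ⟨_, h2⟩
                · exact absurd h1 (fun h => nomatch h)
                · exact absurd h2 (fun h => nomatch h)
    | uz i p => rcases Sym2.eq_iff.mp hends with ⟨h1, _⟩ | ⟨_, h2⟩
                · exact absurd h1 (fun h => nomatch h)
                · exact absurd h2 (fun h => nomatch h)
    | vw i p => rcases Sym2.eq_iff.mp hends with ⟨h1, _⟩ | ⟨_, h2⟩
                · exact absurd h1 (fun h => nomatch h)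
                · exact absurd h2 (fun h => nomatch h)
    | vz i p => rcases Sym2.eq_iff.mp hends with ⟨h1, _⟩ | ⟨_, h2⟩
                · exact absurd h1 (fun h => nomatch h)
                · exact absurd h2 (fun h => nomatch h)
    | wz i p => rcases Sym2.eq_iff.mp hends with ⟨h1, _⟩ | ⟨_, h2⟩
                · exact absurd h1 (fun h => nomatch h)
                · exact absurd h2 (fun h => nomatch h)
    | ru i p b => rcases Sym2.eq_iff.mp hends with ⟨h1, _⟩ | ⟨_, h2⟩
                  · exact absurd h1 (fun h => nomatch h)
                  · exact absurd h2 (fun h => nomatch h)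
  have := reach_closed _ hclosed hreach ⟨0, rfl⟩
  obtain ⟨q, hq⟩ := this
  exact nomatch hq

end Gadget

/-- If the edge set of the edge-colored graph `G(Φ)` can be partitioned
into two rainbow spanning trees, then `Φ` has a not-all-equal truth assignment. -/
theorem nae_of_two_rainbow_spanning_trees {n m : ℕ} (Φ : NAE4Instance n m)
    (h : ∃ T₁ T₂ : Set (Edg n m), TwoRainbowSpanningTrees Φ T₁ T₂) :
    HasNAEAssignment Φ := by
  classical
  obtain ⟨T₁, T₂, hU, hD, hS1, hS2, hR1, hR2⟩ := h
  have hu : ∀ e, e ∈ T₁ ↔ e ∉ T₂ := by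
    intro e
    have he : e ∈ T₁ ∪ T₂ := hU ▸ Set.mem_univ e
    have hd := Set.disjoint_left.mp hD
    constructor
    · exact fun h1 => hd h1
    · intro h2
      rcases he with h | h
      · exact h
      · exact absurd h h2
  have hu' : ∀ e, e ∈ T₂ ↔ e ∉ T₁ := fun e => by have := hu e; tauto
  refine ⟨fun i => decide (Edg.wz i 0 ∈ T₁), fun j => ?_⟩
  have key : ∀ q : Fin 3,
      ((fun i => decide (Edg.wz i 0 ∈ T₁)) (Φ.occ (j, q)).1 = true ↔ Edg.zc j q ∈ T₂) := by
    intro q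
    simp only [decide_eq_true_iff]
    exact ((wz_consistent Φ hu hS1 hS2 hR1 hR2 (Φ.occ (j, q)).1 (Φ.occ (j, q)).2).symm).trans
      (zc_iff_wz Φ hu hR1 hR2 j q)
  constructor
  · -- some q with zc j q ∈ T₂
    have : ¬ ∀ q, Edg.zc j q ∈ T₁ := fun hall => clause_not_all Φ hu hS2 j hall
    push_neg at this
    obtain ⟨q, hq⟩ := this
    exact ⟨q, (key q).mpr ((hu' _).mpr hq)⟩
  · have : ¬ ∀ q, Edg.zc j q ∈ T₂ := fun hall => clause_not_all Φ hu' hS1 j hall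
    push_neg at this
    obtain ⟨q, hq⟩ := this
    refine ⟨q, ?_⟩
    have := (key q).not.mpr hq
    simpa using this

end PackingRainbowStmt2
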